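/- Fix t ∈ T and let μ_t be the pushforward of μ under f ↦ f(t), restricted to (0,∞), with tail function μ̄_t(x) = μ_t([x,∞)). The following are equivalent: (i) Φ_{{t}}^+(C_0) = 1 almost surely; (ii) μ̄_t(0^+) = +∞ and μ̄_t is continuous on (0,∞); (iii) the distribution of η(t) has no atom. Here P(η(t) < x) = exp(−μ̄_t(x)) for x > 0. -/

import Mathlib

open MeasureTheory Set ENNReal

noncomputable section

/-- The set of atoms of a point measure. -/
def atomsOf {α : Type*} [MeasurableSpace α] (M : Measure α) : Set α := {f | M {f} ≠ 0}

/-- Pointwise maximum function `max(M)(t) = max {f t : f atom of M}`. -/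
def maxM {T : Type*} [TopologicalSpace T] [MeasurableSpace C(T, ℝ)]
    (M : Measure C(T, ℝ)) (t : T) : ℝ :=
  sSup ((fun f : C(T, ℝ) => f t) '' atomsOf M)

/-- `M` belongs to `M_p(C_0)`: a point measure on nonnegative nonzero continuous
functions, with finitely many atoms (with multiplicity) of norm `> ε` for every `ε > 0`. -/
def IsMp {T : Type*} [MetricSpace T] [CompactSpace T] [MeasurableSpace C(T, ℝ)]
    (M : Measure C(T, ℝ)) : Prop :=
  ∃ (c : ℕ → ℕ) (φ : ℕ → C(T, ℝ)),
    M = Measure.sum (fun n => (c n : ℝ≥0∞) • Measure.dirac (φ n)) ∧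
    (∀ n, c n ≠ 0 → 0 ≤ φ n ∧ φ n ≠ 0) ∧
    (∀ ε : ℝ, 0 < ε → {n | c n ≠ 0 ∧ ε < ‖φ n‖}.Finite)

/-- `Φ` is a Poisson random measure on `α` with intensity `μ`, under `P`. -/
def IsPoissonPM {Ω : Type*} [MeasurableSpace Ω] {α : Type*} [MeasurableSpace α]
    (P : Measure Ω) (Φ : Ω → Measure α) (μ : Measure α) : Prop :=
  (∀ A : Set α, MeasurableSet A → Measurable fun ω => Φ ω A) ∧
  (∀ A : Set α, MeasurableSet A → μ A ≠ ⊤ → ∀ n : ℕ,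
      P {ω | Φ ω A = n} =
        ENNReal.ofReal (Real.exp (-(μ A).toReal) * (μ A).toReal ^ n / n.factorial)) ∧
  ∀ (m : ℕ) (A : Fin m → Set α), (∀ i, MeasurableSet (A i)) →
      Pairwise (Function.onFun Disjoint A) →
      ProbabilityTheory.iIndepFun (fun i ω => Φ ω (A i)) P

/-- `exp(-x)` for extended nonnegative `x`. -/
def Eexp (x : ℝ≥0∞) : ℝ≥0∞ :=
  if x = ⊤ then 0 else ENNReal.ofReal (Real.exp (-x.toReal))

/-!
Write `D_x = {f | f t = x}` and `G_x = {f | x < f t}`. For `x > 0` we have `η(t) = x` exactly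
when `Φ` charges `D_x` but not `G_x`, and then `Φ_{{t}}^+(C_0) = Φ(D_x)`; `η(t) = 0` exactly when
`Φ(G_0) = 0`, and then `Φ_{{t}}^+(C_0) = Φ(D_0)`. As `Φ(D_x)` and `Φ(G_x)` are independent Poisson
counts, (i) and (iii) are both equivalent to: `μ(G_0) = ∞` and `μ(D_x) = 0` for all `x > 0`;
this is (ii), because `μ̄_t(0⁺) = μ(G_0)` and the jump of `μ̄_t` at `x` is `μ(D_x)`.

The one non-elementary step is that ties do not occur: if the values `f t ≥ ε` carry a finite
diffuse intensity, cut the real line into countably many pieces of intensity at most `γ`; the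
probability that some piece receives two points is at most `∑ μ(piece)² ≤ γ · μ(f t ≥ ε)`.
-/

open Filter Topology

section TailFunction

variable (ν : Measure ℝ)

theorem antitone_measure_Ici : Antitone fun x => ν (Ici x) :=
  fun _ _ hab => measure_mono (Ici_subset_Ici.2 hab)

theorem measure_Ici_eq_add (x : ℝ) : ν (Ici x) = ν {x} + ν (Ioi x) := by
  rw [← Ioi_insert, insert_eq, measure_union (by simp) measurableSet_Ioi]

theorem tendsto_measure_Ici_nhdsGT (x : ℝ) :
    Tendsto (fun y => ν (Ici y)) (𝓝[>] x) (𝓝 (ν (Ioi x))) := by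
  obtain ⟨u, hu_anti, hxu, hu⟩ := exists_seq_strictAnti_tendsto_nhdsWithin x
  have hunion : ⋃ n, Ici (u n) = Ioi x := by
    refine Subset.antisymm (iUnion_subset fun n => Ici_subset_Ioi.2 (hxu n)) fun y hy => ?_
    obtain ⟨n, hn⟩ := ((tendsto_nhds_of_tendsto_nhdsWithin hu).eventually
      (eventually_lt_nhds (mem_Ioi.1 hy))).exists
    exact mem_iUnion.2 ⟨n, hn.le⟩
  have hseq : Tendsto (fun n => ν (Ici (u n))) atTop (𝓝 (ν (Ioi x))) :=
    hunion ▸ tendsto_measure_iUnion_atTop fun _ _ hmn => Ici_subset_Ici.2 (hu_anti.antitone hmn)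
  have hlim := (antitone_measure_Ici ν).tendsto_nhdsGT x
  rwa [tendsto_nhds_unique (hlim.comp hu) hseq] at hlim

theorem tendsto_measure_Ici_nhdsLT {x y : ℝ} (hyx : y < x) (hy : ν (Ici y) ≠ ∞) :
    Tendsto (fun z => ν (Ici z)) (𝓝[<] x) (𝓝 (ν (Ici x))) := by
  obtain ⟨u, hu_mono, hu_mem, hu⟩ := exists_seq_strictMono_tendsto' hyx
  have hinter : ⋂ n, Ici (u n) = Ici x := by
    refine Subset.antisymm (fun z hz => le_of_tendsto' hu fun n => mem_iInter.1 hz n) ?_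
    exact subset_iInter fun n => Ici_subset_Ici.2 (hu_mem n).2.le
  have hseq : Tendsto (fun n => ν (Ici (u n))) atTop (𝓝 (ν (Ici x))) :=
    hinter ▸ tendsto_measure_iInter_atTop (fun _ => measurableSet_Ici.nullMeasurableSet)
      (fun _ _ hmn => Ici_subset_Ici.2 (hu_mono.monotone hmn))
      ⟨0, ne_top_of_le_ne_top hy (measure_mono (Ici_subset_Ici.2 (hu_mem 0).1.le))⟩
  have hu' : Tendsto u atTop (𝓝[<] x) :=
    tendsto_nhdsWithin_iff.2 ⟨hu, Eventually.of_forall fun n => (hu_mem n).2⟩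
  have hlim := (antitone_measure_Ici ν).tendsto_nhdsLT x
  rwa [tendsto_nhds_unique (hlim.comp hu') hseq] at hlim

theorem continuousAt_measure_Ici_iff {x y : ℝ} (hyx : y < x) (hy : ν (Ici y) ≠ ∞) :
    ContinuousAt (fun z => ν (Ici z)) x ↔ ν {x} = 0 := by
  have hx : ν (Ioi x) ≠ ∞ := ne_top_of_le_ne_top hy (measure_mono (Ioi_subset_Ici hyx.le))
  rw [continuousAt_iff_continuous_left'_right', ContinuousWithinAt, ContinuousWithinAt]
  simp only [tendsto_measure_Ici_nhdsLT ν hyx hy, true_and]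
  refine ⟨fun h => ?_, fun h => ?_⟩
  · have := tendsto_nhds_unique h (tendsto_measure_Ici_nhdsGT ν x)
    rw [measure_Ici_eq_add] at this
    exact (ENNReal.add_left_inj hx).1 (this.trans (zero_add _).symm)
  · simpa [measure_Ici_eq_add, h] using tendsto_measure_Ici_nhdsGT ν x

theorem continuousOn_measure_Ici_iff (hν : ∀ x > 0, ν (Ici x) ≠ ∞) :
    ContinuousOn (fun z => ν (Ici z)) (Ioi 0) ↔ ∀ x > 0, ν {x} = 0 := by
  rw [isOpen_Ioi.continuousOn_iff]
  exact forall₂_congr fun x hx =>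
    continuousAt_measure_Ici_iff ν (half_lt_self hx) (hν _ (half_pos hx))

end TailFunction

section TailOfMeasurableFunction

variable {α : Type*} [MeasurableSpace α] {μ : Measure α} {g : α → ℝ}

theorem measure_le_eq_add (hg : Measurable g) (x : ℝ) :
    μ {a | x ≤ g a} = μ {a | g a = x} + μ {a | x < g a} := by
  have := measure_Ici_eq_add (μ.map g) x
  rwa [Measure.map_apply hg measurableSet_Ici, Measure.map_apply hg (measurableSet_singleton x),
    Measure.map_apply hg measurableSet_Ioi] at this

theorem tendsto_and_continuousOn_measure_le_iff (hg : Measurable g)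
    (hμg : ∀ x > 0, μ {a | x ≤ g a} ≠ ∞) :
    (Tendsto (fun x => μ {a | x ≤ g a}) (𝓝[>] 0) (𝓝 ∞) ∧
        ContinuousOn (fun x => μ {a | x ≤ g a}) (Ioi 0)) ↔
      μ {a | 0 < g a} = ∞ ∧ ∀ x > 0, μ {a | g a = x} = 0 := by
  set ν := μ.map g
  have hν : ∀ {s}, MeasurableSet s → ν s = μ (g ⁻¹' s) := fun hs => Measure.map_apply hg hs
  have htail : (fun x => μ {a | x ≤ g a}) = fun x => ν (Ici x) :=
    funext fun _ => (hν measurableSet_Ici).symm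
  rw [htail, continuousOn_measure_Ici_iff ν fun x hx => hν measurableSet_Ici ▸ hμg x hx]
  refine and_congr ⟨fun h => ?_, fun h => ?_⟩ (forall₂_congr fun x _ => by
    rw [hν (measurableSet_singleton x)]; rfl)
  · exact (hν measurableSet_Ioi).symm.trans (tendsto_nhds_unique (tendsto_measure_Ici_nhdsGT ν 0) h)
  · rw [← h]
    exact hν measurableSet_Ioi ▸ tendsto_measure_Ici_nhdsGT ν 0

end TailOfMeasurableFunction

theorem ENNReal.tsum_natCast_eq_zero_or_eq_one {g : ℕ → ℕ} (h : ∑' n, (g n : ℝ≥0∞) < 2) :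
    ∑' n, (g n : ℝ≥0∞) = 0 ∨ ∑' n, (g n : ℝ≥0∞) = 1 := by
  by_cases hg : ∀ n, g n = 0
  · simp [hg]
  obtain ⟨m, hm⟩ := not_forall.1 hg
  refine Or.inr (le_antisymm (ENNReal.tsum_le_of_sum_range_le fun n => ?_) ?_)
  · have hsum : ((∑ i ∈ Finset.range n, g i : ℕ) : ℝ≥0∞) < 2 := by
      push_cast
      exact (ENNReal.sum_le_tsum _).trans_lt h
    have : ∑ i ∈ Finset.range n, g i < 2 := by exact_mod_cast hsum
    exact_mod_cast Nat.le_of_lt_succ this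
  · calc (1 : ℝ≥0∞) ≤ g m := by exact_mod_cast Nat.one_le_iff_ne_zero.2 hm
      _ ≤ ∑' n, (g n : ℝ≥0∞) := ENNReal.le_tsum m

section SumOfDiracs

variable {α : Type*} [MeasurableSpace α] {c : ℕ → ℕ} {φ : ℕ → α} {A : Set α}

theorem Measure.sum_natCast_smul_dirac_apply (hA : MeasurableSet A) :
    Measure.sum (fun n => (c n : ℝ≥0∞) • Measure.dirac (φ n)) A =
      ∑' n, ((A.indicator (fun _ => c n) (φ n) : ℕ) : ℝ≥0∞) := by
  rw [Measure.sum_apply _ hA]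
  refine tsum_congr fun n => ?_
  by_cases h : φ n ∈ A <;> simp [Measure.dirac_apply' _ hA, h]

theorem Measure.sum_natCast_smul_dirac_apply_eq_zero_iff (hA : MeasurableSet A) :
    Measure.sum (fun n => (c n : ℝ≥0∞) • Measure.dirac (φ n)) A = 0 ↔ ∀ n, φ n ∈ A → c n = 0 := by
  simp [Measure.sum_natCast_smul_dirac_apply hA, indicator_apply_eq_zero]

theorem atomsOf_sum_natCast_smul_dirac [MeasurableSingletonClass α] :
    atomsOf (Measure.sum fun n => (c n : ℝ≥0∞) • Measure.dirac (φ n)) = φ '' {n | c n ≠ 0} := by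
  ext f
  rw [atomsOf, mem_ofPred, Ne,
    Measure.sum_natCast_smul_dirac_apply_eq_zero_iff (measurableSet_singleton f)]
  simp only [mem_singleton_iff, mem_image, mem_ofPred, not_forall]
  exact ⟨fun ⟨n, hn, hc⟩ => ⟨n, hc, hn⟩, fun ⟨n, hc, hn⟩ => ⟨n, hn, hc⟩⟩

end SumOfDiracs

theorem bddAbove_of_finite_inter_Ioi {V : Set ℝ} (hV : ∀ ε > 0, (V ∩ Ioi ε).Finite) :
    BddAbove V :=
  (bddAbove_Iic.union (hV 1 one_pos).bddAbove).mono fun v hv =>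
    (le_or_gt v 1).imp id fun h => ⟨hv, h⟩

theorem exists_isGreatest_of_finite_inter_Ioi {V : Set ℝ} (hV : ∀ ε > 0, (V ∩ Ioi ε).Finite)
    {v : ℝ} (hv : v ∈ V) (hv0 : 0 < v) : ∃ w, IsGreatest V w := by
  obtain ⟨w, ⟨hwV, hvw⟩, hw⟩ := exists_max_image (V ∩ Ici v) id
    ((hV (v / 2) (half_pos hv0)).subset fun u hu => ⟨hu.1, (half_lt_self hv0).trans_le hu.2⟩)
    ⟨v, hv, mem_Ici.2 le_rfl⟩
  refine ⟨w, hwV, fun u hu => ?_⟩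
  rcases le_or_gt v u with h | h
  · exact hw u ⟨hu, h⟩
  · exact h.le.trans hvw

theorem measurable_eval_const {T : Type*} [TopologicalSpace T] [MeasurableSpace C(T, ℝ)]
    [OpensMeasurableSpace C(T, ℝ)] (t : T) : Measurable fun f : C(T, ℝ) => f t :=
  (continuous_eval_const t).measurable

theorem maxM_le {T : Type*} [TopologicalSpace T] [MeasurableSpace C(T, ℝ)] {M : Measure C(T, ℝ)}
    {t : T} {x : ℝ} (hx : 0 ≤ x) (h : ∀ f ∈ atomsOf M, f t ≤ x) : maxM M t ≤ x :=
  Real.sSup_le (by rintro _ ⟨f, hf, rfl⟩; exact h f hf) hx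

theorem IsMp.eq_zero_or_eq_one_of_lt_two {T : Type*} [MetricSpace T] [CompactSpace T]
    [MeasurableSpace C(T, ℝ)] {M : Measure C(T, ℝ)} (hM : IsMp M) {A : Set C(T, ℝ)}
    (hA : MeasurableSet A) (h : M A < 2) : M A = 0 ∨ M A = 1 := by
  obtain ⟨c, φ, rfl, -, -⟩ := hM
  rw [Measure.sum_natCast_smul_dirac_apply hA] at h ⊢
  exact ENNReal.tsum_natCast_eq_zero_or_eq_one h

namespace IsMp

variable {T : Type*} [MetricSpace T] [CompactSpace T]
  [MeasurableSpace C(T, ℝ)] [BorelSpace C(T, ℝ)] {M : Measure C(T, ℝ)} {t : T} {x : ℝ}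

theorem nonneg_of_mem_atomsOf (hM : IsMp M) {f : C(T, ℝ)} (hf : f ∈ atomsOf M) : 0 ≤ f := by
  obtain ⟨c, φ, rfl, hpos, -⟩ := hM
  rw [atomsOf_sum_natCast_smul_dirac] at hf
  obtain ⟨n, hn, rfl⟩ := hf
  exact (hpos n hn).1

theorem finite_eval_image_inter_Ioi (hM : IsMp M) (t : T) {ε : ℝ} (hε : 0 < ε) :
    ((fun f : C(T, ℝ) => f t) '' atomsOf M ∩ Ioi ε).Finite := by
  obtain ⟨c, φ, rfl, -, hfin⟩ := hM
  refine ((hfin ε hε).image fun n => φ n t).subset ?_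
  rintro _ ⟨⟨_, hf, rfl⟩, hv⟩
  rw [atomsOf_sum_natCast_smul_dirac] at hf
  obtain ⟨n, hn, rfl⟩ := hf
  exact ⟨n, ⟨hn, (mem_Ioi.1 hv).trans_le ((le_abs_self _).trans ((φ n).norm_coe_le_norm t))⟩, rfl⟩

theorem measure_eq_zero_iff (hM : IsMp M) {A : Set C(T, ℝ)} (hA : MeasurableSet A) :
    M A = 0 ↔ ∀ f ∈ atomsOf M, f ∉ A := by
  obtain ⟨c, φ, rfl, -, -⟩ := hM
  rw [Measure.sum_natCast_smul_dirac_apply_eq_zero_iff hA, atomsOf_sum_natCast_smul_dirac]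
  refine ⟨fun h f ⟨n, hn, hf⟩ hfA => hn (h n (hf ▸ hfA)), fun h n hnA => ?_⟩
  by_contra hn
  exact h _ ⟨n, hn, rfl⟩ hnA

theorem le_maxM (hM : IsMp M) {f : C(T, ℝ)} (hf : f ∈ atomsOf M) : f t ≤ maxM M t :=
  le_csSup (bddAbove_of_finite_inter_Ioi fun _ => hM.finite_eval_image_inter_Ioi t)
    (mem_image_of_mem _ hf)

theorem maxM_nonneg (hM : IsMp M) : 0 ≤ maxM M t :=
  Real.sSup_nonneg (by rintro _ ⟨f, hf, rfl⟩; exact hM.nonneg_of_mem_atomsOf hf t)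

theorem exists_eval_eq_maxM (hM : IsMp M) (h : 0 < maxM M t) :
    ∃ f ∈ atomsOf M, f t = maxM M t := by
  obtain ⟨v, hv, hv0⟩ : ∃ v ∈ (fun f : C(T, ℝ) => f t) '' atomsOf M, 0 < v := by
    by_contra! hle
    exact h.not_ge (Real.sSup_nonpos hle)
  obtain ⟨w, hw⟩ := exists_isGreatest_of_finite_inter_Ioi
    (fun _ => hM.finite_eval_image_inter_Ioi t) hv hv0
  obtain ⟨f, hf, hfw⟩ := hw.1
  exact ⟨f, hf, hfw.trans hw.csSup_eq.symm⟩

theorem measure_maxM_lt (hM : IsMp M) : M {f | maxM M t < f t} = 0 :=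
  (hM.measure_eq_zero_iff (measurable_eval_const t measurableSet_Ioi)).2
    fun _ hf h => (hM.le_maxM hf).not_gt h

theorem measure_eq_maxM_ne_zero (hM : IsMp M) (h : 0 < maxM M t) :
    M {f | f t = maxM M t} ≠ 0 := by
  obtain ⟨f, hf, hft⟩ := hM.exists_eval_eq_maxM h
  exact fun h0 => hf (measure_mono_null (singleton_subset_iff.2 hft) h0)

theorem maxM_le_of_measure_lt_eq_zero (hM : IsMp M) (hx : 0 ≤ x)
    (h : M {f | x < f t} = 0) : maxM M t ≤ x :=
  maxM_le hx fun f hf => not_lt.1 fun hlt =>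
    (hM.measure_eq_zero_iff (measurable_eval_const t measurableSet_Ioi)).1 h f hf hlt

theorem maxM_eq_iff_of_pos (hM : IsMp M) (hx : 0 < x) :
    maxM M t = x ↔ M {f | f t = x} ≠ 0 ∧ M {f | x < f t} = 0 := by
  refine ⟨by rintro rfl; exact ⟨hM.measure_eq_maxM_ne_zero hx, hM.measure_maxM_lt⟩,
    fun ⟨hD, hG⟩ => le_antisymm (hM.maxM_le_of_measure_lt_eq_zero hx.le hG) ?_⟩
  obtain ⟨f, hf, hfx⟩ : ∃ f ∈ atomsOf M, f t = x := by
    by_contra! h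
    exact hD ((hM.measure_eq_zero_iff (measurable_eval_const t (measurableSet_singleton x))).2 h)
  exact hfx ▸ hM.le_maxM hf

theorem maxM_eq_zero_iff (hM : IsMp M) : maxM M t = 0 ↔ M {f | 0 < f t} = 0 :=
  ⟨fun h => h ▸ hM.measure_maxM_lt,
    fun h => le_antisymm (hM.maxM_le_of_measure_lt_eq_zero le_rfl h) hM.maxM_nonneg⟩

theorem measure_maxM_le (hM : IsMp M) :
    M {f | maxM M t ≤ f t} = M {f | f t = maxM M t} := by
  rw [measure_le_eq_add (measurable_eval_const t), hM.measure_maxM_lt, add_zero]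

end IsMp

namespace IsPoissonPM

variable {Ω α : Type*} [MeasurableSpace Ω] [MeasurableSpace α] {P : Measure Ω}
  {Φ : Ω → Measure α} {μ : Measure α} {A B : Set α}

theorem measurableSet_mem (hP : IsPoissonPM P Φ μ) (hA : MeasurableSet A) {s : Set ℝ≥0∞}
    (hs : MeasurableSet s) : MeasurableSet {ω | Φ ω A ∈ s} :=
  hP.1 A hA hs

theorem measure_eq_zero (hP : IsPoissonPM P Φ μ) (hA : MeasurableSet A) (hμA : μ A ≠ ∞) :
    P {ω | Φ ω A = 0} = ENNReal.ofReal (Real.exp (-(μ A).toReal)) := by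
  simpa using hP.2.1 A hA hμA 0

theorem measure_eq_one (hP : IsPoissonPM P Φ μ) (hA : MeasurableSet A) (hμA : μ A ≠ ∞) :
    P {ω | Φ ω A = 1} = ENNReal.ofReal (Real.exp (-(μ A).toReal) * (μ A).toReal) := by
  simpa using hP.2.1 A hA hμA 1

theorem measure_eq_zero_pos (hP : IsPoissonPM P Φ μ) (hA : MeasurableSet A) (hμA : μ A ≠ ∞) :
    0 < P {ω | Φ ω A = 0} := by
  rw [hP.measure_eq_zero hA hμA]
  exact ENNReal.ofReal_pos.2 (Real.exp_pos _)

theorem measure_inter_eq_mul (hP : IsPoissonPM P Φ μ) (hA : MeasurableSet A)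
    (hB : MeasurableSet B) (hAB : Disjoint A B) {s u : Set ℝ≥0∞} (hs : MeasurableSet s)
    (hu : MeasurableSet u) :
    P ({ω | Φ ω A ∈ s} ∩ {ω | Φ ω B ∈ u}) = P {ω | Φ ω A ∈ s} * P {ω | Φ ω B ∈ u} := by
  have hmeas : ∀ i, MeasurableSet (![A, B] i) := Fin.forall_fin_two.2 ⟨hA, hB⟩
  have hdisj : Pairwise (Function.onFun Disjoint ![A, B]) := by
    intro i j hij
    fin_cases i <;> fin_cases j <;> simp_all [Function.onFun, hAB.symm]
  have hind := (hP.2.2 2 ![A, B] hmeas hdisj).indepFun (show (0 : Fin 2) ≠ 1 by decide)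
  exact ProbabilityTheory.indepFun_iff_measure_inter_preimage_eq_mul.1 hind s u hs hu

theorem measure_mem_zero_one (hP : IsPoissonPM P Φ μ) (hA : MeasurableSet A) (hμA : μ A ≠ ∞) :
    P {ω | Φ ω A ∈ ({0, 1} : Set ℝ≥0∞)} =
      ENNReal.ofReal (Real.exp (-(μ A).toReal) * (1 + (μ A).toReal)) := by
  have hunion : {ω | Φ ω A ∈ ({0, 1} : Set ℝ≥0∞)} = {ω | Φ ω A = 0} ∪ {ω | Φ ω A = 1} := by
    ext ω; simp
  have hdisj : Disjoint {ω | Φ ω A = 0} {ω | Φ ω A = 1} :=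
    disjoint_left.2 fun ω h0 h1 => zero_ne_one ((h0 : Φ ω A = 0).symm.trans h1)
  rw [hunion, measure_union hdisj (hP.measurableSet_mem hA (measurableSet_singleton 1)),
    hP.measure_eq_zero hA hμA, hP.measure_eq_one hA hμA,
    ← ENNReal.ofReal_add (Real.exp_nonneg _) (by positivity), mul_one_add]

variable [IsProbabilityMeasure P]

theorem ae_eq_zero (hP : IsPoissonPM P Φ μ) (hA : MeasurableSet A) (hμA : μ A = 0) :
    ∀ᵐ ω ∂P, Φ ω A = 0 := by
  rw [ae_iff]
  have hmeas : MeasurableSet {ω | Φ ω A = 0} := hP.measurableSet_mem hA (measurableSet_singleton 0)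
  change P {ω | Φ ω A = 0}ᶜ = 0
  rw [prob_compl_eq_one_sub hmeas,
    hP.measure_eq_zero hA (by simp [hμA])]
  simp [hμA]

theorem measure_notMem_zero_one (hP : IsPoissonPM P Φ μ) (hA : MeasurableSet A)
    (hμA : μ A ≠ ∞) :
    P {ω | Φ ω A ∈ ({0, 1} : Set ℝ≥0∞)ᶜ} =
      ENNReal.ofReal (1 - Real.exp (-(μ A).toReal) * (1 + (μ A).toReal)) := by
  change P {ω | Φ ω A ∈ ({0, 1} : Set ℝ≥0∞)}ᶜ = _
  rw [prob_compl_eq_one_sub (hP.measurableSet_mem hA ((measurableSet_singleton 1).insert 0)),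
    hP.measure_mem_zero_one hA hμA, ← ENNReal.ofReal_one, ← ENNReal.ofReal_sub _ (by positivity)]

theorem measure_two_le_le_sq (hP : IsPoissonPM P Φ μ) (hA : MeasurableSet A) :
    P {ω | 2 ≤ Φ ω A} ≤ μ A ^ 2 := by
  rcases eq_or_ne (μ A) ∞ with hμA | hμA
  · simp [hμA]
  have hsub : {ω | 2 ≤ Φ ω A} ⊆ {ω | Φ ω A ∈ ({0, 1} : Set ℝ≥0∞)ᶜ} := by
    intro ω (h : 2 ≤ Φ ω A) h01
    rcases h01 with h0 | h1
    · simp [h0] at h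
    · simp [mem_singleton_iff.1 h1] at h
  refine (measure_mono hsub).trans ?_
  rw [hP.measure_notMem_zero_one hA hμA, ← ENNReal.ofReal_toReal hμA, ← ENNReal.ofReal_pow
    ENNReal.toReal_nonneg, ENNReal.toReal_ofReal ENNReal.toReal_nonneg]
  refine ENNReal.ofReal_le_ofReal ?_
  have hm : 0 ≤ (μ A).toReal := ENNReal.toReal_nonneg
  nlinarith [Real.add_one_le_exp (-(μ A).toReal)]

theorem measure_notMem_zero_one_pos (hP : IsPoissonPM P Φ μ) (hA : MeasurableSet A)
    (hμA : μ A ≠ ∞) (hμA₀ : μ A ≠ 0) : 0 < P {ω | Φ ω A ∈ ({0, 1} : Set ℝ≥0∞)ᶜ} := by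
  rw [hP.measure_notMem_zero_one hA hμA, ENNReal.ofReal_pos, sub_pos, Real.exp_neg,
    inv_mul_lt_iff₀ (Real.exp_pos _), mul_one, add_comm]
  exact Real.add_one_lt_exp (ENNReal.toReal_pos hμA₀ hμA).ne'

theorem measure_tie_pos (hP : IsPoissonPM P Φ μ) {g : α → ℝ} (hg : Measurable g) {x : ℝ}
    (hμx : μ {a | x ≤ g a} ≠ ∞) (hD : μ {a | g a = x} ≠ 0) :
    0 < P ({ω | Φ ω {a | g a = x} ∈ ({0, 1} : Set ℝ≥0∞)ᶜ} ∩
      {ω | Φ ω {a | x < g a} ∈ ({0} : Set ℝ≥0∞)}) := by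
  have hDm : MeasurableSet {a | g a = x} := measurableSet_eq_fun hg measurable_const
  have hGm : MeasurableSet {a | x < g a} := measurableSet_lt measurable_const hg
  rw [measure_le_eq_add hg, ENNReal.add_ne_top] at hμx
  rw [hP.measure_inter_eq_mul hDm hGm (disjoint_left.2 fun a (h1 : g a = x) (h2 : x < g a) =>
      h2.ne' h1) ((measurableSet_singleton 1).insert 0).compl (measurableSet_singleton 0)]
  exact ENNReal.mul_pos (hP.measure_notMem_zero_one_pos hDm hμx.1 hD).ne'
    (hP.measure_eq_zero_pos hGm hμx.2).ne'

end IsPoissonPM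

theorem exists_partition_measure_le {X : Type*} [MetricSpace X] [SecondCountableTopology X]
    [MeasurableSpace X] [OpensMeasurableSpace X] (ν : Measure X) [IsFiniteMeasure ν]
    [NullSingletonClass ν] {γ : ℝ≥0∞} (hγ : 0 < γ) :
    ∃ D : ℕ → Set X, (∀ n, MeasurableSet (D n)) ∧ Pairwise (Function.onFun Disjoint D) ∧
      ⋃ n, D n = univ ∧ ∀ n, ν (D n) ≤ γ := by
  rcases isEmpty_or_nonempty X with hX | hX
  · exact ⟨fun _ => ∅, fun _ => .empty, fun _ _ _ => disjoint_bot_left,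
      by simp [univ_eq_empty_iff.2 hX], by simp⟩
  have hball : ∀ x, ∃ r > 0, ν (Metric.ball x r) < γ := fun x => by
    have hlim := tendsto_measure_thickening_of_isClosed (μ := ν)
      ⟨1, one_pos, measure_ne_top _ _⟩ (isClosed_singleton (x := x))
    rw [measure_singleton] at hlim
    obtain ⟨r, hνr, hr⟩ := ((hlim.eventually (gt_mem_nhds hγ)).and self_mem_nhdsWithin).exists
    exact ⟨r, hr, by rwa [← Metric.thickening_singleton]⟩
  choose r hr hνr using hball
  obtain ⟨s, hs, hsU⟩ :=
    TopologicalSpace.countable_cover_nhds fun x => Metric.ball_mem_nhds x (hr x)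
  have hs₀ : s.Nonempty := nonempty_iff_ne_empty.2 fun h => by simp [h, empty_ne_univ] at hsU
  obtain ⟨e, rfl⟩ := hs.exists_eq_range hs₀
  set U := fun n => Metric.ball (e n) (r (e n))
  refine ⟨disjointed U, .disjointed fun _ => Metric.isOpen_ball.measurableSet,
    disjoint_disjointed U, ?_, fun n => (measure_mono (disjointed_subset U n)).trans (hνr _).le⟩
  rw [iUnion_disjointed]
  simpa only [biUnion_range] using hsU

namespace IsPoissonPM

variable {Ω α : Type*} [MeasurableSpace Ω] [MeasurableSpace α] {P : Measure Ω}
  [IsProbabilityMeasure P] {Φ : Ω → Measure α} {μ : Measure α} {A : Set α}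
  {X : Type*} [MetricSpace X] [SecondCountableTopology X] [MeasurableSpace X]
  [OpensMeasurableSpace X]
  {g : α → X}

theorem ae_forall_measure_fiber_lt_two (hP : IsPoissonPM P Φ μ) (hg : Measurable g)
    (hA : MeasurableSet A) (hμA : μ A ≠ ∞) (hfib : ∀ x, μ (g ⁻¹' {x} ∩ A) = 0) :
    ∀ᵐ ω ∂P, ∀ x, Φ ω (g ⁻¹' {x} ∩ A) < 2 := by
  set ν := (μ.restrict A).map g
  have hν : ∀ {D}, MeasurableSet D → ν D = μ (g ⁻¹' D ∩ A) := fun hD => by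
    rw [Measure.map_apply hg hD, Measure.restrict_apply (hg hD)]
  have : IsFiniteMeasure (μ.restrict A) := isFiniteMeasure_restrict.2 hμA
  have : NullSingletonClass ν := ⟨fun x => (hν (measurableSet_singleton x)).trans (hfib x)⟩
  have hbound : ∀ γ : ℝ≥0∞, 0 < γ →
      P {ω | ∃ x, 2 ≤ Φ ω (g ⁻¹' {x} ∩ A)} ≤ γ * μ A := fun γ hγ => by
    obtain ⟨D, hDm, hDdisj, hDU, hDγ⟩ := exists_partition_measure_le ν hγ
    have hcover : {ω | ∃ x, 2 ≤ Φ ω (g ⁻¹' {x} ∩ A)} ⊆ ⋃ n, {ω | 2 ≤ Φ ω (g ⁻¹' D n ∩ A)} := by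
      rintro ω ⟨x, hx⟩
      obtain ⟨n, hn⟩ := mem_iUnion.1 (hDU ▸ mem_univ x)
      exact mem_iUnion.2 ⟨n, hx.trans (measure_mono (inter_subset_inter_left _
        (preimage_mono (singleton_subset_iff.2 hn))))⟩
    calc P {ω | ∃ x, 2 ≤ Φ ω (g ⁻¹' {x} ∩ A)}
        ≤ ∑' n, P {ω | 2 ≤ Φ ω (g ⁻¹' D n ∩ A)} := (measure_mono hcover).trans (measure_iUnion_le _)
      _ ≤ ∑' n, γ * ν (D n) := ENNReal.tsum_le_tsum fun n => calc
          _ ≤ ν (D n) ^ 2 := hν (hDm n) ▸ hP.measure_two_le_le_sq ((hg (hDm n)).inter hA)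
          _ ≤ γ * ν (D n) := by rw [pow_two]; exact mul_le_mul_left (hDγ n) _
      _ = γ * μ A := by
          rw [ENNReal.tsum_mul_left, ← measure_iUnion hDdisj hDm, hDU, hν .univ, preimage_univ,
            univ_inter]
  have hlim : Tendsto (fun n : ℕ => (n : ℝ≥0∞)⁻¹ * μ A) atTop (𝓝 0) := by
    simpa using ENNReal.Tendsto.mul_const ENNReal.tendsto_inv_nat_nhds_zero (.inr hμA)
  rw [ae_iff]
  simp only [not_forall, not_lt]
  exact le_antisymm (ge_of_tendsto' hlim fun n => hbound _ (ENNReal.inv_pos.2 (natCast_ne_top n)))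
    bot_le

end IsPoissonPM

theorem Real.tendsto_exp_neg_mul_one_add_atTop :
    Tendsto (fun m => Real.exp (-m) * (1 + m)) atTop (𝓝 0) := by
  have := (Real.tendsto_pow_mul_exp_neg_atTop_nhds_zero 0).add
    (Real.tendsto_pow_mul_exp_neg_atTop_nhds_zero 1)
  simp only [pow_zero, pow_one, one_mul, add_zero] at this
  exact this.congr fun m => by ring

theorem sigmaFinite_of_measure_lt_norm_ne_top {E : Type*} [NormedAddCommGroup E]
    [MeasurableSpace E] {μ : Measure E} (hμ : ∀ ε : ℝ, 0 < ε → μ {f : E | ε < ‖f‖} ≠ ⊤)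
    (hμ₀ : μ {0} = 0) : SigmaFinite μ := by
  refine Measure.sigmaFinite_of_countable (S := insert {0} (range fun n : ℕ =>
    {f : E | 1 / (n + 1 : ℝ) < ‖f‖})) ((countable_range _).insert _) ?_ ?_
  · rintro _ (rfl | ⟨n, rfl⟩)
    exacts [hμ₀ ▸ zero_lt_top, (hμ _ Nat.one_div_pos_of_nat).lt_top]
  · refine eq_univ_of_forall fun f => ?_
    rcases eq_or_ne f 0 with rfl | hf
    · exact mem_sUnion_of_mem (mem_singleton 0) (mem_insert _ _)
    · obtain ⟨n, hn⟩ := exists_nat_one_div_lt (norm_pos_iff.2 hf)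
      exact mem_sUnion_of_mem hn (mem_insert_of_mem _ ⟨n, rfl⟩)



namespace IsPoissonPM

variable {T : Type*} [MetricSpace T] [CompactSpace T] [MeasurableSpace C(T, ℝ)]
  {Ω : Type*} [MeasurableSpace Ω] {P : Measure Ω}
  {Φ : Ω → Measure C(T, ℝ)} {μ : Measure C(T, ℝ)} {A : Set C(T, ℝ)}

theorem measure_le_one_eq_zero (hP : IsPoissonPM P Φ μ) (hMp : ∀ ω, IsMp (Φ ω))
    [SigmaFinite μ] (hA : MeasurableSet A) (hμA : μ A = ∞) : P {ω | Φ ω A ≤ 1} = 0 := by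
  set B := fun n => A ∩ spanningSets μ n
  have hBm : ∀ n, MeasurableSet (B n) := fun n => hA.inter (measurableSet_spanningSets μ n)
  have hBfin : ∀ n, μ (B n) ≠ ∞ := fun n =>
    ne_top_of_le_ne_top (measure_spanningSets_lt_top μ n).ne (measure_mono inter_subset_right)
  have hBtop : Tendsto (fun n => (μ (B n)).toReal) atTop atTop := by
    have := tendsto_measure_iUnion_atTop (μ := μ)
      fun _ _ hmn => inter_subset_inter_right A (monotone_spanningSets μ hmn)
    rw [← inter_iUnion, iUnion_spanningSets, inter_univ, hμA] at this
    exact tendsto_ofReal_nhds_top.1 (this.congr fun n => (ENNReal.ofReal_toReal (hBfin n)).symm)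
  have hbound : ∀ n, P {ω | Φ ω A ≤ 1} ≤
      ENNReal.ofReal (Real.exp (-(μ (B n)).toReal) * (1 + (μ (B n)).toReal)) := fun n => by
    refine (measure_mono fun ω (hω : Φ ω A ≤ 1) => ?_).trans
      (hP.measure_mem_zero_one (hBm n) (hBfin n)).le
    have hlt : Φ ω (B n) < 2 :=
      (measure_mono inter_subset_left).trans_lt (hω.trans_lt one_lt_two)
    exact (hMp ω).eq_zero_or_eq_one_of_lt_two (hBm n) hlt
  have hlim := ENNReal.tendsto_ofReal (Real.tendsto_exp_neg_mul_one_add_atTop.comp hBtop)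
  rw [ENNReal.ofReal_zero] at hlim
  exact le_antisymm (ge_of_tendsto' hlim hbound) bot_le

theorem measure_ne_one_pos [IsProbabilityMeasure P] (hP : IsPoissonPM P Φ μ)
    (hMp : ∀ ω, IsMp (Φ ω)) [SigmaFinite μ]
    (hA : MeasurableSet A) : 0 < P {ω | Φ ω A ∈ ({1} : Set ℝ≥0∞)ᶜ} := by
  have hmeas : MeasurableSet {ω | Φ ω A = 1} := hP.measurableSet_mem hA (measurableSet_singleton 1)
  change 0 < P {ω | Φ ω A = 1}ᶜ
  rw [prob_compl_eq_one_sub hmeas, tsub_pos_iff_lt]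
  rcases eq_or_ne (μ A) ∞ with hμA | hμA
  · calc P {ω | Φ ω A = 1} ≤ P {ω | Φ ω A ≤ 1} := measure_mono fun ω h => le_of_eq h
      _ = 0 := hP.measure_le_one_eq_zero hMp hA hμA
      _ < 1 := zero_lt_one
  · rw [hP.measure_eq_one hA hμA, ENNReal.ofReal_lt_one, Real.exp_neg,
      inv_mul_lt_iff₀ (Real.exp_pos _), mul_one]
    linarith [Real.add_one_le_exp (μ A).toReal]

end IsPoissonPM

theorem measure_le_eval_ne_top {T : Type*} [TopologicalSpace T] [CompactSpace T]
    [MeasurableSpace C(T, ℝ)] {μ : Measure C(T, ℝ)}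
    (hμ : ∀ ε : ℝ, 0 < ε → μ {f : C(T, ℝ) | ε < ‖f‖} ≠ ⊤) (t : T) {x : ℝ} (hx : 0 < x) :
    μ {f : C(T, ℝ) | x ≤ f t} ≠ ∞ :=
  ne_top_of_le_ne_top (hμ _ (half_pos hx)) <| measure_mono fun f (hf : x ≤ f t) =>
    (half_lt_self hx).trans_le (hf.trans ((le_abs_self _).trans (f.norm_coe_le_norm t)))

namespace IsPoissonPM

variable {T : Type*} [MetricSpace T] [CompactSpace T]
  [MeasurableSpace C(T, ℝ)] [BorelSpace C(T, ℝ)] {t : T} {x : ℝ}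
  {Ω : Type*} [MeasurableSpace Ω] {P : Measure Ω}
  {Φ : Ω → Measure C(T, ℝ)} {μ : Measure C(T, ℝ)}

theorem measure_maxM_eq_zero_eq_zero_iff (hP : IsPoissonPM P Φ μ) (hMp : ∀ ω, IsMp (Φ ω))
    [SigmaFinite μ] : P {ω | maxM (Φ ω) t = 0} = 0 ↔ μ {f : C(T, ℝ) | 0 < f t} = ∞ := by
  have hG : MeasurableSet {f : C(T, ℝ) | 0 < f t} :=
    measurableSet_lt measurable_const (measurable_eval_const t)
  have hevent : {ω | maxM (Φ ω) t = 0} = {ω | Φ ω {f | 0 < f t} = 0} :=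
    ext fun ω => (hMp ω).maxM_eq_zero_iff
  rw [hevent]
  refine ⟨fun h => by_contra fun hfin => (hP.measure_eq_zero_pos hG hfin).ne' h, fun h => ?_⟩
  exact measure_mono_null (fun ω (hω : Φ ω _ = 0) => hω.trans_le zero_le_one)
    (hP.measure_le_one_eq_zero hMp hG h)

variable [IsProbabilityMeasure P]

theorem measure_maxM_eq_eq_zero_iff_of_pos (hP : IsPoissonPM P Φ μ) (hMp : ∀ ω, IsMp (Φ ω))
    (hx : 0 < x) (hμx : μ {f : C(T, ℝ) | x ≤ f t} ≠ ∞) :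
    P {ω | maxM (Φ ω) t = x} = 0 ↔ μ {f : C(T, ℝ) | f t = x} = 0 := by
  refine ⟨fun h => by_contra fun hD =>
    (hP.measure_tie_pos (measurable_eval_const t) hμx hD).ne' (measure_mono_null ?_ h), fun h => ?_⟩
  · rintro ω ⟨h01, h0⟩
    exact ((hMp ω).maxM_eq_iff_of_pos hx).2 ⟨fun h' => h01 (Or.inl h'), h0⟩
  · refine measure_mono_null (fun ω (hω : maxM (Φ ω) t = x) => ?_)
      (ae_iff.1 (hP.ae_eq_zero (measurableSet_eq_fun (measurable_eval_const t) measurable_const) h))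
    exact (((hMp ω).maxM_eq_iff_of_pos hx).1 hω).1

theorem forall_measure_maxM_eq_eq_zero_iff (hP : IsPoissonPM P Φ μ) (hMp : ∀ ω, IsMp (Φ ω))
    [SigmaFinite μ] (hμt : ∀ x > 0, μ {f : C(T, ℝ) | x ≤ f t} ≠ ∞) :
    (∀ x, P {ω | maxM (Φ ω) t = x} = 0) ↔
      μ {f : C(T, ℝ) | 0 < f t} = ∞ ∧ ∀ x > 0, μ {f : C(T, ℝ) | f t = x} = 0 := by
  refine ⟨fun h => ⟨(hP.measure_maxM_eq_zero_eq_zero_iff hMp).1 (h 0), fun x hx =>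
    (hP.measure_maxM_eq_eq_zero_iff_of_pos hMp hx (hμt x hx)).1 (h x)⟩, fun ⟨h0, hD⟩ x => ?_⟩
  rcases lt_trichotomy x 0 with hx | rfl | hx
  · exact measure_mono_null (fun ω (hω : maxM (Φ ω) t = x) =>
      hx.not_ge (hω ▸ (hMp ω).maxM_nonneg)) measure_empty
  · exact (hP.measure_maxM_eq_zero_eq_zero_iff hMp).2 h0
  · exact (hP.measure_maxM_eq_eq_zero_iff_of_pos hMp hx (hμt x hx)).2 (hD x hx)

theorem measure_pos_eval_eq_top_of_ae_extremal_eq_one (hP : IsPoissonPM P Φ μ)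
    (hMp : ∀ ω, IsMp (Φ ω)) [SigmaFinite μ]
    (h : ∀ᵐ ω ∂P, Φ ω {f | maxM (Φ ω) t ≤ f t} = 1) : μ {f : C(T, ℝ) | 0 < f t} = ∞ := by
  have hDm : MeasurableSet {f : C(T, ℝ) | f t = 0} :=
    measurableSet_eq_fun (measurable_eval_const t) measurable_const
  have hGm : MeasurableSet {f : C(T, ℝ) | 0 < f t} :=
    measurableSet_lt measurable_const (measurable_eval_const t)
  by_contra hG
  -- with positive probability no atom is positive at `t`, and not exactly one atom vanishes there
  have hpos : 0 < P ({ω | Φ ω {f | f t = 0} ∈ ({1} : Set ℝ≥0∞)ᶜ} ∩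
      {ω | Φ ω {f | 0 < f t} ∈ ({0} : Set ℝ≥0∞)}) := by
    rw [hP.measure_inter_eq_mul hDm hGm (disjoint_left.2 fun f (h1 : f t = 0) (h2 : 0 < f t) =>
      h2.ne' h1) (measurableSet_singleton 1).compl (measurableSet_singleton 0)]
    exact ENNReal.mul_pos (hP.measure_ne_one_pos hMp hDm).ne' (hP.measure_eq_zero_pos hGm hG).ne'
  refine hpos.ne' (measure_mono_null (fun ω ⟨h1, h0⟩ => ?_) (ae_iff.1 h))
  rw [mem_ofPred, (hMp ω).measure_maxM_le, (hMp ω).maxM_eq_zero_iff.2 h0]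
  exact h1

theorem measure_eval_eq_eq_zero_of_ae_extremal_eq_one (hP : IsPoissonPM P Φ μ)
    (hMp : ∀ ω, IsMp (Φ ω)) (hx : 0 < x) (hμx : μ {f : C(T, ℝ) | x ≤ f t} ≠ ∞)
    (h : ∀ᵐ ω ∂P, Φ ω {f | maxM (Φ ω) t ≤ f t} = 1) : μ {f : C(T, ℝ) | f t = x} = 0 := by
  by_contra hD
  refine (hP.measure_tie_pos (measurable_eval_const t) hμx hD).ne'
    (measure_mono_null (fun ω ⟨h01, h0⟩ => ?_) (ae_iff.1 h))
  rw [mem_ofPred, (hMp ω).measure_maxM_le,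
    ((hMp ω).maxM_eq_iff_of_pos hx).2 ⟨fun h' => h01 (Or.inl h'), h0⟩]
  exact fun h' => h01 (Or.inr h')

theorem ae_extremal_eq_one (hP : IsPoissonPM P Φ μ) (hMp : ∀ ω, IsMp (Φ ω)) [SigmaFinite μ]
    (hμt : ∀ x > 0, μ {f : C(T, ℝ) | x ≤ f t} ≠ ∞) (hG : μ {f : C(T, ℝ) | 0 < f t} = ∞)
    (hD : ∀ x > 0, μ {f : C(T, ℝ) | f t = x} = 0) :
    ∀ᵐ ω ∂P, Φ ω {f | maxM (Φ ω) t ≤ f t} = 1 := by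
  have hη : ∀ᵐ ω ∂P, maxM (Φ ω) t ≠ 0 :=
    ae_iff.2 (by simpa using (hP.measure_maxM_eq_zero_eq_zero_iff hMp).2 hG)
  have hties : ∀ᵐ ω ∂P, ∀ (n : ℕ) y, Φ ω ((fun f : C(T, ℝ) => f t) ⁻¹' {y} ∩
      {f | 1 / (n + 1 : ℝ) ≤ f t}) < 2 := ae_all_iff.2 fun n =>
    hP.ae_forall_measure_fiber_lt_two (measurable_eval_const t)
      (measurableSet_le measurable_const (measurable_eval_const t))
      (hμt _ Nat.one_div_pos_of_nat) fun y => by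
        rcases lt_or_ge y (1 / (n + 1 : ℝ)) with hy | hy
        · exact measure_mono_null (fun f ⟨(h1 : f t = y), (h2 : _ ≤ f t)⟩ =>
            hy.not_ge (h1 ▸ h2)) measure_empty
        · exact measure_mono_null inter_subset_left (hD y (Nat.one_div_pos_of_nat.trans_le hy))
  filter_upwards [hη, hties] with ω hη hties
  have hpos := (hMp ω).maxM_nonneg.lt_of_ne (Ne.symm hη)
  obtain ⟨n, hn⟩ := exists_nat_one_div_lt hpos
  rw [(hMp ω).measure_maxM_le]
  refine ((hMp ω).eq_zero_or_eq_one_of_lt_two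
    (measurableSet_eq_fun (measurable_eval_const t) measurable_const)
    ((measure_mono ?_).trans_lt (hties n (maxM (Φ ω) t)))).resolve_left
    ((hMp ω).measure_eq_maxM_ne_zero hpos)
  exact fun f (hf : f t = _) => ⟨hf, hn.le.trans_eq hf.symm⟩

theorem ae_extremal_eq_one_iff (hP : IsPoissonPM P Φ μ) (hMp : ∀ ω, IsMp (Φ ω))
    [SigmaFinite μ] (hμt : ∀ x > 0, μ {f : C(T, ℝ) | x ≤ f t} ≠ ∞) :
    (∀ᵐ ω ∂P, Φ ω {f | maxM (Φ ω) t ≤ f t} = 1) ↔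
      μ {f : C(T, ℝ) | 0 < f t} = ∞ ∧ ∀ x > 0, μ {f : C(T, ℝ) | f t = x} = 0 :=
  ⟨fun h => ⟨hP.measure_pos_eval_eq_top_of_ae_extremal_eq_one hMp h, fun x hx =>
    hP.measure_eval_eq_eq_zero_of_ae_extremal_eq_one hMp hx (hμt x hx) h⟩,
    fun ⟨hG, hD⟩ => hP.ae_extremal_eq_one hMp hμt hG hD⟩

end IsPoissonPM

/-- Proposition 2, equivalences: for `t ∈ T`, with
`μ̄_t(x) = μ {f : f(t) ≥ x}`, the following are equivalent:
(i) `Φ_{{t}}^+(C_0) = 1` a.s.;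
(ii) `μ̄_t(0⁺) = ∞` and `μ̄_t` is continuous on `(0,∞)`;
(iii) the law of `η(t)` has no atom. -/
theorem single_point_extremal_equiv {T : Type*} [MetricSpace T] [CompactSpace T]
    [MeasurableSpace C(T, ℝ)] [BorelSpace C(T, ℝ)]
    {Ω : Type*} [MeasurableSpace Ω] (P : Measure Ω) [IsProbabilityMeasure P]
    (μ : Measure C(T, ℝ)) (hμ : ∀ ε : ℝ, 0 < ε → μ {f : C(T, ℝ) | ε < ‖f‖} ≠ ⊤)
    (hμ0 : ∀ᵐ f ∂μ, 0 ≤ f ∧ f ≠ 0)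
    (Φ : Ω → Measure C(T, ℝ)) (hP : IsPoissonPM P Φ μ) (hMp : ∀ ω, IsMp (Φ ω))
    (t : T)
    (μbar : ℝ → ℝ≥0∞) (hμbar : ∀ x, μbar x = μ {f : C(T, ℝ) | x ≤ f t})
    (Φp : Ω → Measure C(T, ℝ))
    (hΦp : ∀ ω, Φp ω = (Φ ω).restrict {f : C(T, ℝ) | maxM (Φ ω) t ≤ f t}) :
    -- (i) ↔ (ii)
    ((∀ᵐ ω ∂P, Φp ω Set.univ = 1) ↔
      (Filter.Tendsto μbar (nhdsWithin 0 (Set.Ioi 0)) (nhds ⊤) ∧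
        ContinuousOn μbar (Set.Ioi 0))) ∧
    -- (i) ↔ (iii)
    ((∀ᵐ ω ∂P, Φp ω Set.univ = 1) ↔
      ∀ x : ℝ, P {ω | maxM (Φ ω) t = x} = 0) := by
  have : SigmaFinite μ := sigmaFinite_of_measure_lt_norm_ne_top hμ <|
    measure_mono_null (fun f (hf : f = 0) (hf' : 0 ≤ f ∧ f ≠ 0) => hf'.2 hf) (ae_iff.1 hμ0)
  have hμt : ∀ x > 0, μ {f : C(T, ℝ) | x ≤ f t} ≠ ∞ := fun _ => measure_le_eval_ne_top hμ t
  obtain rfl : μbar = fun x => μ {f : C(T, ℝ) | x ≤ f t} := funext hμbar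
  simp only [hΦp, Measure.restrict_apply_univ]
  have h_i := hP.ae_extremal_eq_one_iff hMp hμt
  exact ⟨h_i.trans (tendsto_and_continuousOn_measure_le_iff (measurable_eval_const t) hμt).symm,
    h_i.trans (hP.forall_measure_maxM_eq_eq_zero_iff hMp hμt).symm⟩
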